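/- arXiv:1505.01973 — 2 statements merged into one kernel-verified Lean document; each statement's English description precedes it below -/
import Mathlib

section
/- Let φ be an aromatic forest. For a partition p of φ into subgraphs each of which is an aromatic tree (connected up to the assignment convention: formed by cutting a set of edges and assigning each rootless component to a rooted component), let χ(p) be the skeleton obtained by collapsing each part to a single vertex. Then the number of labelled partitions refining p (bijective assignments of the parts to the vertices of χ(p) compatible with the collapse) equals |Aut(χ(p))|. -/
open scoped Classical

/-- An aromatic forest: finite directed graph with out-degree at most one. -/
structure AForest where
  n : ℕ
  out : Fin n → Option (Fin n)

/-- Isomorphism of aromatic forests. -/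
def AForest.Iso (φ ψ : AForest) : Prop :=
  ∃ e : Fin φ.n ≃ Fin ψ.n, ∀ v, ψ.out (e v) = (φ.out v).map e

/-- The single-vertex rooted tree `•`. -/
def dot : AForest := ⟨1, fun _ => none⟩

/-- The 1-loop: one vertex with a self-loop. -/
def loopA : AForest := ⟨1, fun i => some i⟩

/-- An aromatic tree: an aromatic forest with exactly one root. -/
def IsATree (τ : AForest) : Prop := ∃! r : Fin τ.n, τ.out r = none

/-- The graph obtained by cutting the outgoing edges of the vertices in `D`. -/
def AForest.cut (φ : AForest) (D : Finset (Fin φ.n)) : AForest :=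
  ⟨φ.n, fun v => if v ∈ D then none else φ.out v⟩

/-- The induced subgraph on a subset `S` of the vertices (edges leaving `S` are dropped). -/
def AForest.induce (φ : AForest) (S : Finset (Fin φ.n)) : AForest where
  n := S.card
  out := fun i =>
    (φ.out (S.orderIsoOfFin rfl i).1).bind fun w =>
      if h : w ∈ S then some ((S.orderIsoOfFin rfl).symm ⟨w, h⟩) else none

/-- `(c, D)` is a partition of `φ` into aromatic trees: `D` is the set of cut
edges (given by their source vertices), `c` assigns each vertex to a part; the
parts are unions of components of the cut graph (each rootless component being
assigned to a rooted one), and each part contains exactly one root of the cut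
graph, hence is an aromatic tree. -/
def IsPart (φ : AForest) {m : ℕ} (c : Fin φ.n → Fin m) (D : Finset (Fin φ.n)) : Prop :=
  Function.Surjective c ∧
  (∀ v ∈ D, φ.out v ≠ none) ∧
  (∀ v, v ∉ D → ∀ w, φ.out v = some w → c v = c w) ∧
  (∀ j, ∃! v, c v = j ∧ (φ.out v = none ∨ v ∈ D))

/-- The part of the partition `(c, D)` assigned to `j`: the induced subgraph of
the cut graph on the fiber `c⁻¹(j)`. -/
noncomputable def partOf (φ : AForest) {m : ℕ} (c : Fin φ.n → Fin m) (D : Finset (Fin φ.n))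
    (j : Fin m) : AForest :=
  (φ.cut D).induce (Finset.univ.filter fun v => c v = j)

/-- The skeleton of a partition: collapse each part to a single vertex; the
outgoing edge of the part `j` is the (possibly cut) original outgoing edge of its
unique root. -/
noncomputable def skel (φ : AForest) {m : ℕ} (c : Fin φ.n → Fin m)
    (D : Finset (Fin φ.n)) (h : IsPart φ c D) : AForest :=
  ⟨m, fun j => (φ.out (h.2.2.2 j).choose).map c⟩

/-- The sum `Σ_p a(χ(p)) Π_θ b(θ)` over the partitions of `φ` into aromatic
trees satisfying the predicate `Q`. -/
noncomputable def substSum (b a : AForest → ℚ) (φ : AForest)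
    (Q : (m : ℕ) → (Fin φ.n → Fin m) → Finset (Fin φ.n) → Prop) : ℚ :=
  ∑ m ∈ Finset.range (φ.n + 1), ∑ c : Fin φ.n → Fin m, ∑ D : Finset (Fin φ.n),
    if h : IsPart φ c D ∧ Q m c D then
      a (skel φ c D h.1) * ∏ j : Fin m, b (partOf φ c D j)
    else 0

/-- The substitution product `(b ⋆ a)(φ) = Σ_{p ∈ P(φ)} a(χ(p)) Π_{θ} b(θ)`. -/
noncomputable def subst (b a : AForest → ℚ) (φ : AForest) : ℚ :=
  substSum b a φ fun _ _ _ => True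

/-- The automorphism group of a graph with out-degree at most one. -/
def autG {α : Type} (g : α → Option α) : Subgroup (Equiv.Perm α) where
  carrier := {e | ∀ v, g (e v) = (g v).map ⇑e}
  one_mem' := by intro v; simp
  mul_mem' := by
    intro a b ha hb v
    have h1 := ha (b v)
    have h2 := hb v
    simp only [Equiv.Perm.coe_mul, Function.comp_apply, h1, h2, Option.map_map]
  inv_mem' := by
    intro a ha v
    have h := ha (a⁻¹ v)
    rw [show a (a⁻¹ v) = v from by simp] at h
    rw [h]
    have h2 : ⇑a⁻¹ ∘ ⇑a = id := by ext x; simp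
    rw [Option.map_map, h2, Option.map_id]; rfl

/-! Relabelling the parts of a partition along a bijection `ℓ` gives again a partition, in which
the part `ℓ j` has the same root as the part `j` had. Its skeleton is therefore `χ(p)` transported
along `ℓ`, and this equals `χ(p)` exactly when `ℓ` is an automorphism of `χ(p)`. -/

theorem mem_autG_iff {α : Type} (g : α → Option α) (e : Equiv.Perm α) :
    e ∈ autG g ↔ (fun j => (g (e.symm j)).map e) = g := by
  refine ⟨fun he => funext fun j => ?_, fun he v => ?_⟩
  · rw [← he (e.symm j), Equiv.apply_symm_apply]
  · simpa only [Equiv.symm_apply_apply] using (congrFun he (e v)).symm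

namespace IsPart

variable {φ : AForest} {m k : ℕ} {c : Fin φ.n → Fin m} {D : Finset (Fin φ.n)}

theorem comp_equiv (h : IsPart φ c D) (e : Fin m ≃ Fin k) : IsPart φ (e ∘ c) D := by
  obtain ⟨hsurj, hcut, hcomp, hroot⟩ := h
  refine ⟨e.surjective.comp hsurj, hcut, fun v hv w hw => congrArg e (hcomp v hv w hw), fun j => ?_⟩
  simpa only [Function.comp_apply, ← e.eq_symm_apply] using hroot (e.symm j)

/-- `skel` reads the outgoing edge of part `j` off this vertex. -/
noncomputable def root (h : IsPart φ c D) (j : Fin m) : Fin φ.n :=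
  (h.2.2.2 j).choose

theorem root_spec (h : IsPart φ c D) (j : Fin m) :
    c (h.root j) = j ∧ (φ.out (h.root j) = none ∨ h.root j ∈ D) :=
  (h.2.2.2 j).choose_spec.1

theorem eq_root (h : IsPart φ c D) {v : Fin φ.n} (hv : φ.out v = none ∨ v ∈ D) :
    v = h.root (c v) :=
  (h.2.2.2 (c v)).choose_spec.2 v ⟨rfl, hv⟩

theorem root_comp_equiv (h : IsPart φ c D) (e : Fin m ≃ Fin k) (h' : IsPart φ (e ∘ c) D)
    (j : Fin k) : h'.root j = h.root (e.symm j) := by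
  obtain ⟨hc, hv⟩ := h.root_spec (e.symm j)
  have := h'.eq_root hv
  rw [Function.comp_apply, hc, Equiv.apply_symm_apply] at this
  exact this.symm

end IsPart

theorem skel_comp_equiv_out (φ : AForest) {m k : ℕ} (c : Fin φ.n → Fin m)
    (D : Finset (Fin φ.n)) (h : IsPart φ c D) (e : Fin m ≃ Fin k) (h' : IsPart φ (e ∘ c) D) :
    (skel φ (e ∘ c) D h').out = fun j => ((skel φ c D h).out (e.symm j)).map e := by
  refine funext fun (j : Fin k) => ?_
  change (φ.out (h'.root j)).map (e ∘ c) = ((φ.out (h.root (e.symm j))).map c).map e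
  rw [h.root_comp_equiv e h', Option.map_map]

theorem skel_eq_skel_iff (φ : AForest) {m : ℕ} (c c' : Fin φ.n → Fin m) (D : Finset (Fin φ.n))
    (h : IsPart φ c D) (h' : IsPart φ c' D) :
    skel φ c' D h' = skel φ c D h ↔ (skel φ c' D h').out = (skel φ c D h).out :=
  AForest.mk.injEq _ _ _ _ ▸ (and_iff_right rfl).trans heq_iff_eq

/-- The number of labellings of a partition `p` of `φ` into aromatic trees
(bijective assignments of the parts to the vertices of the skeleton `χ(p)`
inducing the same collapsed graph) equals `|Aut(χ(p))|`. -/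
theorem labellings_card_eq_aut_skeleton (φ : AForest) (m : ℕ)
    (c : Fin φ.n → Fin m) (D : Finset (Fin φ.n)) (h : IsPart φ c D) :
    Nat.card {ℓ : Equiv.Perm (Fin m) //
        ∃ h' : IsPart φ (⇑ℓ ∘ c) D, skel φ (⇑ℓ ∘ c) D h' = skel φ c D h}
      = Nat.card (autG (skel φ c D h).out) := by
  refine Nat.card_congr (Equiv.subtypeEquivRight fun ℓ => ?_)
  have h' := h.comp_equiv ℓ
  rw [exists_prop_of_true h', skel_eq_skel_iff, skel_comp_equiv_out φ c D h ℓ h']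
  exact (mem_autG_iff _ ℓ).symm
end

section
/- Define ∇b on rootless aromatic forests by (∇b)(φ) = Σ_{v ∈ V(φ)} b(φ_v), where φ_v is the aromatic tree (forest with one root) obtained from φ by deleting the unique edge out of v, provided φ is connected rootless so that every vertex has an outgoing edge and the deletion yields exactly one root. Then this agrees with the substitution-law specialization b ⋆ ℓ*, where ℓ is the 1-loop: the only partitions of φ with skeleton ℓ are given by choosing a vertex v and cutting its outgoing edge, and each such partition contributes b(φ_v); in particular b ⋆ ℓ* vanishes on any aromatic forest with at least one root. -/
open scoped Classical

/-- Undirected adjacency underlying the directed graph. -/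
def AForest.Adj (φ : AForest) (a b : Fin φ.n) : Prop :=
  φ.out a = some b ∨ φ.out b = some a

/-- The dual basis functional of the 1-loop `ℓ`: the indicator of its
isomorphism class. -/
noncomputable def loopStar : AForest → ℚ :=
  fun ψ => if AForest.Iso ψ loopA then 1 else 0

/-! `ℓ*` only sees one-part partitions whose skeleton vertex carries a loop, i.e. whose root
is the source of a cut edge. A root of `φ` is always the root of its part and stays a root of the
skeleton, so every term vanishes when `φ` has a root. When `φ` is rootless, the one-part partitions
are exactly the single cuts `D = {v}`, and their part is `φ` with the edge out of `v` deleted. -/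

noncomputable def substTerm (b a : AForest → ℚ) (φ : AForest) {m : ℕ} (c : Fin φ.n → Fin m)
    (D : Finset (Fin φ.n)) : ℚ :=
  if h : IsPart φ c D then a (skel φ c D h) * ∏ j : Fin m, b (partOf φ c D j) else 0

lemma subst_eq_sum_substTerm (b a : AForest → ℚ) (φ : AForest) :
    subst b a φ = ∑ m ∈ Finset.range (φ.n + 1), ∑ c : Fin φ.n → Fin m,
      ∑ D : Finset (Fin φ.n), substTerm b a φ c D := by
  unfold subst substSum substTerm
  simp only [and_true]

namespace AForest

lemma not_iso_loopA_of_n_ne_one {ψ : AForest} (h : ψ.n ≠ 1) : ¬ ψ.Iso loopA :=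
  fun ⟨e, _⟩ => h (Fin.equiv_iff_eq.1 ⟨e⟩)

lemma not_iso_loopA_of_root {ψ : AForest} {r : Fin ψ.n} (hr : ψ.out r = none) :
    ¬ ψ.Iso loopA := by
  rintro ⟨e, he⟩
  simpa [hr, loopA] using he r

lemma iso_loopA {ψ : AForest} (h1 : ψ.n = 1) (hroot : ∀ v, ψ.out v ≠ none) : ψ.Iso loopA := by
  refine ⟨finCongr h1, fun v => ?_⟩
  obtain ⟨w, hw⟩ := Option.ne_none_iff_exists'.1 (hroot v)
  rw [hw]
  exact congrArg some (Subsingleton.elim _ _)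

lemma cut_singleton (φ : AForest) (v : Fin φ.n) :
    φ.cut {v} = ⟨φ.n, Function.update φ.out v none⟩ := by
  refine congrArg (AForest.mk φ.n) (funext fun w => ?_)
  by_cases h : w = v <;> simp [h]

lemma induce_univ_iso (ψ : AForest) : (ψ.induce Finset.univ).Iso ψ := by
  let o := (Finset.univ : Finset (Fin ψ.n)).orderIsoOfFin rfl
  let e : Fin (Finset.univ : Finset (Fin ψ.n)).card ≃ Fin ψ.n :=
    o.toEquiv.trans (Equiv.subtypeUnivEquiv Finset.mem_univ)
  have he : ∀ j, e j = o j := fun _ => rfl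
  refine ⟨e, fun i => ?_⟩
  show ψ.out (o i) = (Option.bind (ψ.out (o i)) fun w =>
    if h : w ∈ Finset.univ then some (o.symm ⟨w, h⟩) else none).map e
  cases ψ.out (o i) with
  | none => rfl
  | some w =>
    simp only [Option.bind_some, dif_pos (Finset.mem_univ w), Option.map_some, he,
      o.apply_symm_apply]

end AForest

lemma loopStar_eq_zero_of_n_ne_one {ψ : AForest} (h : ψ.n ≠ 1) : loopStar ψ = 0 :=
  if_neg (AForest.not_iso_loopA_of_n_ne_one h)

lemma loopStar_eq_zero_of_root {ψ : AForest} {r : Fin ψ.n} (hr : ψ.out r = none) :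
    loopStar ψ = 0 :=
  if_neg (AForest.not_iso_loopA_of_root hr)

lemma loopStar_eq_one {ψ : AForest} (h1 : ψ.n = 1) (hroot : ∀ v, ψ.out v ≠ none) :
    loopStar ψ = 1 :=
  if_pos (AForest.iso_loopA h1 hroot)

lemma substTerm_eq_zero_of_lt (b a : AForest → ℚ) {φ : AForest} {m : ℕ} (hm : φ.n < m)
    (c : Fin φ.n → Fin m) (D : Finset (Fin φ.n)) : substTerm b a φ c D = 0 :=
  dif_neg fun h => hm.not_ge (by simpa using Fintype.card_le_of_surjective c h.1)

lemma substTerm_loopStar_of_ne_one (b : AForest → ℚ) (φ : AForest) {m : ℕ} (hm : m ≠ 1)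
    (c : Fin φ.n → Fin m) (D : Finset (Fin φ.n)) : substTerm b loopStar φ c D = 0 := by
  unfold substTerm
  split_ifs
  · rw [loopStar_eq_zero_of_n_ne_one hm, zero_mul]
  · rfl

lemma subst_loopStar_eq_sum (b : AForest → ℚ) (φ : AForest) :
    subst b loopStar φ = ∑ D, substTerm b loopStar φ (fun _ => (0 : Fin 1)) D := by
  rw [subst_eq_sum_substTerm, Finset.sum_eq_single 1, Fintype.sum_unique]
  · rfl
  · intro m _ hm
    simp only [substTerm_loopStar_of_ne_one b φ hm, Finset.sum_const_zero]
  · intro h1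
    have hn : φ.n < 1 := by simpa using h1
    simp only [substTerm_eq_zero_of_lt b loopStar hn, Finset.sum_const_zero]

lemma skel_out_of_root {φ : AForest} {m : ℕ} {c : Fin φ.n → Fin m} {D : Finset (Fin φ.n)}
    (h : IsPart φ c D) {r : Fin φ.n} (hr : φ.out r = none) :
    (skel φ c D h).out (c r) = none := by
  -- `r` is the unique root of its part
  obtain ⟨-, huniq⟩ := (h.2.2.2 (c r)).choose_spec
  show (φ.out _).map c = none
  rw [← huniq r ⟨rfl, Or.inl hr⟩, hr, Option.map_none]

lemma skel_out_ne_none {φ : AForest} (hroot : ∀ v, φ.out v ≠ none) {m : ℕ}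
    {c : Fin φ.n → Fin m} {D : Finset (Fin φ.n)} (h : IsPart φ c D) (j : Fin m) :
    (skel φ c D h).out j ≠ none :=
  mt Option.map_eq_none_iff.1 (hroot _)

lemma substTerm_loopStar_of_root (b : AForest → ℚ) {φ : AForest} {r : Fin φ.n}
    (hr : φ.out r = none) {m : ℕ} (c : Fin φ.n → Fin m) (D : Finset (Fin φ.n)) :
    substTerm b loopStar φ c D = 0 := by
  unfold substTerm
  split_ifs with h
  · rw [loopStar_eq_zero_of_root (skel_out_of_root h hr), zero_mul]
  · rfl

lemma subst_loopStar_of_root (b : AForest → ℚ) {φ : AForest} {r : Fin φ.n}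
    (hr : φ.out r = none) : subst b loopStar φ = 0 := by
  rw [subst_loopStar_eq_sum]
  exact Finset.sum_eq_zero fun D _ => substTerm_loopStar_of_root b hr _ D

lemma isPart_singleton {φ : AForest} (hroot : ∀ v, φ.out v ≠ none) (v : Fin φ.n) :
    IsPart φ (fun _ => (0 : Fin 1)) {v} := by
  refine ⟨fun _ => ⟨v, Subsingleton.elim _ _⟩, fun w _ => hroot w, fun _ _ _ _ => rfl,
    fun _ => ⟨v, ⟨Subsingleton.elim _ _, Or.inr (Finset.mem_singleton_self v)⟩, fun w hw => ?_⟩⟩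
  simpa [hroot w] using hw.2

lemma IsPart.eq_singleton {φ : AForest} (hroot : ∀ v, φ.out v ≠ none) {c : Fin φ.n → Fin 1}
    {D : Finset (Fin φ.n)} (h : IsPart φ c D) : ∃ v, D = {v} := by
  obtain ⟨v, hv, huniq⟩ := h.2.2.2 0
  refine ⟨v, Finset.eq_singleton_iff_unique_mem.2 ⟨?_, fun w hw =>
    huniq w ⟨Subsingleton.elim _ _, Or.inr hw⟩⟩⟩
  simpa [hroot v] using hv.2

lemma partOf_fin_one_iso (φ : AForest) (c : Fin φ.n → Fin 1) (D : Finset (Fin φ.n))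
    (j : Fin 1) : (partOf φ c D j).Iso (φ.cut D) := by
  have hfiber : partOf φ c D j = (φ.cut D).induce Finset.univ := by
    unfold partOf
    congr 1
    exact Finset.filter_true_of_mem fun _ _ => Subsingleton.elim _ _
  rw [hfiber]
  exact (φ.cut D).induce_univ_iso

lemma substTerm_loopStar_singleton (b : AForest → ℚ)
    (hb_iso : ∀ φ ψ, AForest.Iso φ ψ → b φ = b ψ) {φ : AForest}
    (hroot : ∀ v, φ.out v ≠ none) (v : Fin φ.n) :
    substTerm b loopStar φ (fun _ => (0 : Fin 1)) {v} = b (φ.cut {v}) := by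
  rw [substTerm, dif_pos (isPart_singleton hroot v),
    loopStar_eq_one rfl (skel_out_ne_none hroot _), one_mul, Fin.prod_univ_one]
  exact hb_iso _ _ (partOf_fin_one_iso φ _ {v} 0)

lemma subst_loopStar_of_rootless (b : AForest → ℚ)
    (hb_iso : ∀ φ ψ, AForest.Iso φ ψ → b φ = b ψ) {φ : AForest}
    (hroot : ∀ v, φ.out v ≠ none) : subst b loopStar φ = ∑ v, b (φ.cut {v}) := by
  rw [subst_loopStar_eq_sum]
  refine (Fintype.sum_of_injective (fun v => {v}) Finset.singleton_injective _ _
    (fun D hD => dif_neg fun h => hD ?_) fun v => ?_).symm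
  · obtain ⟨v, rfl⟩ := IsPart.eq_singleton hroot h
    exact ⟨v, rfl⟩
  · exact (substTerm_loopStar_singleton b hb_iso hroot v).symm

/-- The divergence `∇b = b ⋆ ℓ*`: for a connected rootless aromatic forest `φ`
(so every vertex has an outgoing edge, and deleting it yields exactly one root),
`(b ⋆ ℓ*)(φ) = Σ_{v ∈ V(φ)} b(φ_v)` where `φ_v` deletes the edge out of `v`;
and `b ⋆ ℓ*` vanishes on every aromatic forest with at least one root. -/
theorem divergence_of_aromatic_series (b : AForest → ℚ)
    (hb_iso : ∀ φ ψ, AForest.Iso φ ψ → b φ = b ψ) :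
    (∀ φ : AForest, (∀ v, φ.out v ≠ none) →
      (∀ v w : Fin φ.n, Relation.ReflTransGen φ.Adj v w) →
      subst b loopStar φ = ∑ v : Fin φ.n, b ⟨φ.n, Function.update φ.out v none⟩) ∧
    (∀ ψ : AForest, (∃ r, ψ.out r = none) → subst b loopStar ψ = 0) := by
  refine ⟨fun φ hroot _ => ?_, fun ψ ⟨r, hr⟩ => subst_loopStar_of_root b hr⟩
  simp only [subst_loopStar_of_rootless b hb_iso hroot, AForest.cut_singleton]
end
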